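/- arXiv:2309.08910 — 10 statements merged into one kernel-verified Lean document; each statement's English description precedes it below -/
import Mathlib

section
/- Least-squares coefficients for the transformed multiple regression: let n ≥ 4, let e₁ be the first standard basis vector of ℝⁿ, X̃ = (x₁, x₂, 0, …, 0) with x₂ > 0, M̃ = (m₁, m₂, m₃, 0, …, 0) with m₃ > 0, and Ỹ = (y₁, y₂, y₃, y₄, 0, …, 0). Then the (unique) minimizer (i, b, d) ∈ ℝ³ of ‖Ỹ − i·e₁ − b·M̃ − d·X̃‖² satisfies b = y₃/m₃ and d = (m₃y₂ − m₂y₃)/(x₂m₃). -/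
/-!
The residual `Ỹ − i·e₁ − b·M̃ − d·X̃` is `(y₁ − i − b m₁ − d x₁, y₂ − b m₂ − d x₂, y₃ − b m₃, y₄, 0, …, 0)`,
so the residual sum of squares is `y₄²` plus three squares. The design is triangular with
nonzero pivots `x₂` and `m₃`, so one choice of `(i, b, d)` makes the three squares vanish
together: the minimum is `y₄²`, every minimizer annihilates the three residuals, and
back-substitution gives `b` and `d`.
-/

theorem Fin.sum_univ_eq_sum_castLE {M : Type*} [AddCommMonoid M] {k n : ℕ} (hk : k ≤ n)
    (f : Fin n → M) (hf : ∀ j : Fin n, k ≤ (j : ℕ) → f j = 0) :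
    ∑ j, f j = ∑ j : Fin k, f (Fin.castLE hk j) := by
  refine (Fintype.sum_of_injective _ (Fin.castLE_injective hk) _ f (fun j hj => hf j ?_)
    fun _ => rfl).symm
  by_contra! hjk
  exact hj ⟨⟨j, hjk⟩, rfl⟩

theorem triangular_least_squares {x₁ x₂ m₁ m₂ m₃ y₁ y₂ y₃ i b d : ℝ} (hx₂ : x₂ ≠ 0)
    (hm₃ : m₃ ≠ 0)
    (hmin : ∀ i' b' d' : ℝ,
      (y₁ - i - b * m₁ - d * x₁) ^ 2 + (y₂ - b * m₂ - d * x₂) ^ 2 + (y₃ - b * m₃) ^ 2 ≤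
        (y₁ - i' - b' * m₁ - d' * x₁) ^ 2 + (y₂ - b' * m₂ - d' * x₂) ^ 2 + (y₃ - b' * m₃) ^ 2) :
    b = y₃ / m₃ ∧ d = (m₃ * y₂ - m₂ * y₃) / (x₂ * m₃) := by
  set b₀ := y₃ / m₃
  set d₀ := (m₃ * y₂ - m₂ * y₃) / (x₂ * m₃)
  have hr₁ : y₁ - (y₁ - b₀ * m₁ - d₀ * x₁) - b₀ * m₁ - d₀ * x₁ = 0 := by ring
  have hr₂ : y₂ - b₀ * m₂ - d₀ * x₂ = 0 := by simp only [b₀, d₀]; field_simp; ring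
  have hr₃ : y₃ - b₀ * m₃ = 0 := by simp only [b₀]; field_simp; ring
  have hle := hmin (y₁ - b₀ * m₁ - d₀ * x₁) b₀ d₀
  rw [hr₁, hr₂, hr₃] at hle
  have hb : y₃ - b * m₃ = 0 := by
    nlinarith [sq_nonneg (y₁ - i - b * m₁ - d * x₁), sq_nonneg (y₂ - b * m₂ - d * x₂)]
  have hd : y₂ - b * m₂ - d * x₂ = 0 := by
    nlinarith [sq_nonneg (y₁ - i - b * m₁ - d * x₁), sq_nonneg (y₃ - b * m₃)]
  have hb₀ : b = b₀ := mul_right_cancel₀ hm₃ (by linear_combination hr₃ - hb)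
  exact ⟨hb₀, mul_right_cancel₀ hx₂ (by linear_combination hr₂ - hd - m₂ * hb₀)⟩

/-- Least-squares coefficients for the transformed multiple regression: for `n ≥ 4`,
`e₁ = (1,0,…,0)`, `X̃ = (x₁,x₂,0,…,0)` with `x₂ > 0`, `M̃ = (m₁,m₂,m₃,0,…,0)` with
`m₃ > 0`, and `Ỹ = (y₁,y₂,y₃,y₄,0,…,0)`, every minimizer `(i, b, d)` of
`‖Ỹ − i·e₁ − b·M̃ − d·X̃‖²` satisfies `b = y₃/m₃` and `d = (m₃y₂ − m₂y₃)/(x₂m₃)`. -/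
theorem lse_coefficients_transformed_multiple_regression
    (n : ℕ) (hn : 4 ≤ n) (x₁ x₂ m₁ m₂ m₃ y₁ y₂ y₃ y₄ : ℝ)
    (hx₂ : 0 < x₂) (hm₃ : 0 < m₃)
    (e₁ X M Y : Fin n → ℝ)
    (he₁ : e₁ = fun i => if i = (⟨0, by omega⟩ : Fin n) then (1 : ℝ) else 0)
    (hX : X = fun i => if i = (⟨0, by omega⟩ : Fin n) then x₁
      else if i = (⟨1, by omega⟩ : Fin n) then x₂ else 0)
    (hM : M = fun i => if i = (⟨0, by omega⟩ : Fin n) then m₁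
      else if i = (⟨1, by omega⟩ : Fin n) then m₂
      else if i = (⟨2, by omega⟩ : Fin n) then m₃ else 0)
    (hY : Y = fun i => if i = (⟨0, by omega⟩ : Fin n) then y₁
      else if i = (⟨1, by omega⟩ : Fin n) then y₂
      else if i = (⟨2, by omega⟩ : Fin n) then y₃
      else if i = (⟨3, by omega⟩ : Fin n) then y₄ else 0)
    (i b d : ℝ)
    (hmin : ∀ i' b' d' : ℝ,
      ∑ j, (Y j - i * e₁ j - b * M j - d * X j) ^ 2 ≤
        ∑ j, (Y j - i' * e₁ j - b' * M j - d' * X j) ^ 2) :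
    b = y₃ / m₃ ∧ d = (m₃ * y₂ - m₂ * y₃) / (x₂ * m₃) := by
  have rss_eq : ∀ i' b' d' : ℝ,
      ∑ j, (Y j - i' * e₁ j - b' * M j - d' * X j) ^ 2 =
        (y₁ - i' - b' * m₁ - d' * x₁) ^ 2 + (y₂ - b' * m₂ - d' * x₂) ^ 2 +
          (y₃ - b' * m₃) ^ 2 + y₄ ^ 2 := by
    intro i' b' d'
    subst he₁ hX hM hY
    rw [Fin.sum_univ_eq_sum_castLE hn, Fin.sum_univ_four]
    · simp [Fin.ext_iff]
    · intro j hj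
      have hj_ne : (j : ℕ) ≠ 0 ∧ (j : ℕ) ≠ 1 ∧ (j : ℕ) ≠ 2 ∧ (j : ℕ) ≠ 3 := by omega
      simp [Fin.ext_iff, hj_ne]
  exact triangular_least_squares hx₂.ne' hm₃.ne' fun i' b' d' => by
    simpa only [rss_eq, add_le_add_iff_right] using hmin i' b' d'
end

section
/- Geometric inequality underlying the superfluousness of the total-effect test (emptiness of the complementary bad region): let r₀, p₀ be real numbers with 0 < r₀ ≤ p₀. Then for every real r > r₀ and every real p ≥ 0, r₀·√(p² + 1) < r·p + p₀·√(1 + r²). Consequently, for every r ≥ r₀ the set {p ≥ 0 : r·p + p₀·√(1 + r²) < r₀·√(p² + 1)} is empty. -/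
lemma total_effect_key (r₀ p₀ : ℝ) (hr₀ : 0 < r₀) (hle : r₀ ≤ p₀)
    (r : ℝ) (hr : r₀ ≤ r) (p : ℝ) (hp : 0 ≤ p) :
    r₀ * Real.sqrt (p ^ 2 + 1) < r * p + p₀ * Real.sqrt (1 + r ^ 2) := by
  have h1 : Real.sqrt (p ^ 2 + 1) ≤ p + 1 := by
    rw [show p + 1 = Real.sqrt ((p + 1) ^ 2) by rw [Real.sqrt_sq (by linarith)]]
    exact Real.sqrt_le_sqrt (by nlinarith)
  have h2 : (1 : ℝ) < Real.sqrt (1 + r ^ 2) := by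
    nlinarith [Real.sq_sqrt (show (0:ℝ) ≤ 1 + r ^ 2 by positivity),
      Real.sqrt_nonneg (1 + r ^ 2)]
  nlinarith [mul_le_mul_of_nonneg_left h1 hr₀.le, mul_le_mul_of_nonneg_right hr hp]

/-- Geometric inequality underlying the superfluousness of the total-effect test:
for thresholds `0 < r₀ ≤ p₀`, for every `r > r₀` and `p ≥ 0`,
`r₀·√(p² + 1) < r·p + p₀·√(1 + r²)`; consequently for every `r ≥ r₀` the set
`{p ≥ 0 : r·p + p₀·√(1 + r²) < r₀·√(p² + 1)}` is empty. -/
theorem total_effect_test_superfluous_inequality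
    (r₀ p₀ : ℝ) (hr₀ : 0 < r₀) (hle : r₀ ≤ p₀) :
    (∀ r : ℝ, r₀ < r → ∀ p : ℝ, 0 ≤ p →
      r₀ * Real.sqrt (p ^ 2 + 1) < r * p + p₀ * Real.sqrt (1 + r ^ 2)) ∧
    (∀ r : ℝ, r₀ ≤ r →
      {p : ℝ | 0 ≤ p ∧ r * p + p₀ * Real.sqrt (1 + r ^ 2) < r₀ * Real.sqrt (p ^ 2 + 1)} = ∅) := by
  constructor
  · exact fun r hr p hp => total_effect_key r₀ p₀ hr₀ hle r hr.le p hp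
  · intro r hr
    ext p
    simp only [Set.mem_setOf_eq, Set.mem_empty_iff_false, iff_false, not_and, not_lt]
    exact fun hp => (total_effect_key r₀ p₀ hr₀ hle r hr p hp).le
end

section
/- Nonemptiness of the directionally complementary indirect-only region (Theorem 2, case âb̂d̂ > 0): let r₀ > 0 and p₀ > 0 be real numbers, and let r be any real number with r₀ < r < r₀·√(1 + 1/p₀²). Then there exist real numbers p and q such that p > p₀, r·p < q, q ≤ r₀·√(p² + 1), and q ≤ r·p + p₀·√(r² + 1). (That is, the region where the a-test and b-test reject, the d-test does not reject, and the c-test does not reject is nonempty.) -/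
/-- Nonemptiness of the directionally complementary indirect-only region:
for thresholds `r₀, p₀ > 0` and any `r` with `r₀ < r < r₀·√(1 + 1/p₀²)`, there exist
`p, q` with `p > p₀`, `r·p < q`, `q ≤ r₀·√(p² + 1)`, and `q ≤ r·p + p₀·√(r² + 1)`. -/
theorem indirect_only_complementary_region_nonempty
    (r₀ p₀ r : ℝ) (hr₀ : 0 < r₀) (hp₀ : 0 < p₀)
    (hr₁ : r₀ < r) (hr₂ : r < r₀ * Real.sqrt (1 + 1 / p₀ ^ 2)) :
    ∃ p q : ℝ, p₀ < p ∧ r * p < q ∧ q ≤ r₀ * Real.sqrt (p ^ 2 + 1) ∧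
      q ≤ r * p + p₀ * Real.sqrt (r ^ 2 + 1) := by
  have hr : 0 < r := hr₀.trans hr₁
  -- square the hypothesis hr₂
  have h1 : (0:ℝ) ≤ 1 + 1 / p₀ ^ 2 := by positivity
  have hsq : r ^ 2 < r₀ ^ 2 * (1 + 1 / p₀ ^ 2) := by
    have := mul_self_lt_mul_self (le_of_lt hr) hr₂
    have hs : Real.sqrt (1 + 1 / p₀ ^ 2) * Real.sqrt (1 + 1 / p₀ ^ 2) = 1 + 1 / p₀ ^ 2 :=
      Real.mul_self_sqrt h1
    nlinarith [this, hs]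
  have hdiff : 0 < r ^ 2 - r₀ ^ 2 := by nlinarith
  set s := Real.sqrt (r ^ 2 - r₀ ^ 2) with hs_def
  have hs_pos : 0 < s := Real.sqrt_pos.mpr hdiff
  have hs_sq : s ^ 2 = r ^ 2 - r₀ ^ 2 := Real.sq_sqrt (le_of_lt hdiff)
  -- s < r₀ / p₀, i.e. p₀ * s < r₀
  have hinv : p₀ ^ 2 * (1 / p₀ ^ 2) = 1 := by field_simp
  have h2 : (p₀ * s) ^ 2 < r₀ ^ 2 := by nlinarith [hs_sq, hsq, hinv, sq_nonneg p₀, sq_nonneg r₀]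
  have hps : p₀ * s < r₀ := by nlinarith [h2, mul_pos hp₀ hs_pos]
  have hp₀lt : p₀ < r₀ / s := by
    rw [lt_div_iff₀ hs_pos]; exact hps
  set p := (p₀ + r₀ / s) / 2 with hp_def
  have hpgt : p₀ < p := by rw [hp_def]; linarith
  have hplt : p < r₀ / s := by rw [hp_def]; linarith
  have hp_pos : 0 < p := hp₀.trans hpgt
  have hpslt : p * s < r₀ := by
    have := (lt_div_iff₀ hs_pos).mp hplt; linarith
  -- key: r * p < r₀ * sqrt (p^2 + 1)
  have hkey : r * p < r₀ * Real.sqrt (p ^ 2 + 1) := by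
    have hsqrt : Real.sqrt (p ^ 2 + 1) * Real.sqrt (p ^ 2 + 1) = p ^ 2 + 1 :=
      Real.mul_self_sqrt (by positivity)
    have hsqrt_pos : 0 < Real.sqrt (p ^ 2 + 1) := Real.sqrt_pos.mpr (by positivity)
    have hA : (r * p) ^ 2 < (r₀ * Real.sqrt (p ^ 2 + 1)) ^ 2 := by
      have hps2 : (p * s) ^ 2 < r₀ ^ 2 := by
        nlinarith [hpslt, mul_pos hp_pos hs_pos]
      nlinarith [hsqrt, hs_sq, hps2]
    exact lt_of_pow_lt_pow_left₀ 2 (by positivity) hA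
  refine ⟨p, min (r₀ * Real.sqrt (p ^ 2 + 1)) (r * p + p₀ * Real.sqrt (r ^ 2 + 1)),
    hpgt, ?_, min_le_left _ _, min_le_right _ _⟩
  apply lt_min hkey
  have : 0 < p₀ * Real.sqrt (r ^ 2 + 1) := by positivity
  linarith
end

section
/- Nonemptiness of the directionally competitive indirect-only region when â·b̂·ĉ ≥ 0 (Theorem 2, case âb̂d̂ < 0, âb̂ĉ ≥ 0): let r₀ > 0 and p₀ > 0 be real numbers. Then for every real r > r₀ there exist real numbers p and q such that p > p₀, q ≥ 0, r·p − p₀·√(r² + 1) ≤ q < r·p, and q ≤ r₀·√(p² + 1). (That is, the region where the a-test and b-test reject while the d-test and the total-effect c-test both fail to reject is nonempty.) -/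
/-! The point where the ray `q = r₀ p` meets the `d`-test boundary `q = r p - p₀ √(r² + 1)`
lies in the region: it is below the `c`-test boundary since `p < √(p² + 1)`, strictly below
`q = r p` since `r₀ < r`, and has `p = p₀ √(r² + 1) / (r - r₀) > p₀` since `r - r₀ < r < √(r² + 1)`. -/

lemma Real.lt_sqrt_sq_add_one (x : ℝ) : x < √(x ^ 2 + 1) :=
  Real.lt_sqrt_of_sq_lt (lt_add_one _)

/-- Nonemptiness of the directionally competitive indirect-only region when `â·b̂·ĉ ≥ 0`:
for thresholds `r₀, p₀ > 0` and every `r > r₀`, there exist `p, q` with `p > p₀`, `q ≥ 0`,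
`r·p − p₀·√(r² + 1) ≤ q < r·p`, and `q ≤ r₀·√(p² + 1)`. -/
theorem indirect_only_competitive_region_nonempty_nonneg_c
    (r₀ p₀ : ℝ) (hr₀ : 0 < r₀) (hp₀ : 0 < p₀) :
    ∀ r : ℝ, r₀ < r → ∃ p q : ℝ, p₀ < p ∧ 0 ≤ q ∧
      r * p - p₀ * Real.sqrt (r ^ 2 + 1) ≤ q ∧ q < r * p ∧
      q ≤ r₀ * Real.sqrt (p ^ 2 + 1) := by
  intro r hr
  set s := √(r ^ 2 + 1)
  have hgap : 0 < r - r₀ := sub_pos.mpr hr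
  set p := p₀ * s / (r - r₀)
  have hp : (r - r₀) * p = p₀ * s := mul_div_cancel₀ _ hgap.ne'
  have hp₀p : p₀ < p := by
    rw [lt_div_iff₀ hgap]
    exact mul_lt_mul_of_pos_left (by linarith [Real.lt_sqrt_sq_add_one r]) hp₀
  have hp_pos : 0 < p := hp₀.trans hp₀p
  refine ⟨p, r₀ * p, hp₀p, by positivity, by linarith, ?_, ?_⟩
  · exact mul_lt_mul_of_pos_right hr hp_pos
  · exact mul_le_mul_of_nonneg_left (Real.lt_sqrt_sq_add_one p).le hr₀.le
end

section
/- Lemma 3 (sign lemma for competitive configurations): let x₂ > 0, m₃ > 0, y₄ > 0 be real numbers and let m₂, y₂, y₃ be real numbers. Define â = m₂/x₂, b̂ = y₃/m₃, d̂ = (m₃y₂ − m₂y₃)/(x₂m₃), and ĉ = y₂/x₂. If â·b̂·d̂ < 0 and â·b̂·ĉ ≥ 0, then m₃·|y₂| < |m₂|·|y₃|; equivalently, q < r·p where r = |m₂|/m₃, p = |y₃|/y₄, and q = |y₂|/y₄. -/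
/-- Lemma 3 (sign lemma for competitive configurations): with `x₂, m₃, y₄ > 0` and the
least-squares estimates `â = m₂/x₂`, `b̂ = y₃/m₃`, `d̂ = (m₃y₂ − m₂y₃)/(x₂m₃)`,
`ĉ = y₂/x₂`, if `â·b̂·d̂ < 0` and `â·b̂·ĉ ≥ 0` then `m₃·|y₂| < |m₂|·|y₃|`; equivalently
`q < r·p` where `r = |m₂|/m₃`, `p = |y₃|/y₄`, `q = |y₂|/y₄`. -/
theorem sign_lemma_competitive
    (x₂ m₃ y₄ m₂ y₂ y₃ : ℝ) (hx₂ : 0 < x₂) (hm₃ : 0 < m₃) (hy₄ : 0 < y₄)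
    (ahat bhat dhat chat : ℝ)
    (ha : ahat = m₂ / x₂) (hb : bhat = y₃ / m₃)
    (hd : dhat = (m₃ * y₂ - m₂ * y₃) / (x₂ * m₃)) (hc : chat = y₂ / x₂)
    (habd : ahat * bhat * dhat < 0) (habc : 0 ≤ ahat * bhat * chat) :
    m₃ * |y₂| < |m₂| * |y₃| ∧ |y₂| / y₄ < (|m₂| / m₃) * (|y₃| / y₄) := by
  subst ha hb hd hc
  have hx := hx₂.ne'
  have hm := hm₃.ne'
  have h1 : m₂ * y₃ * (m₃ * y₂ - m₂ * y₃) < 0 := by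
    have hp : (0:ℝ) < x₂ * x₂ * m₃ * m₃ := by positivity
    have heq : m₂ / x₂ * (y₃ / m₃) * ((m₃ * y₂ - m₂ * y₃) / (x₂ * m₃))
        = m₂ * y₃ * (m₃ * y₂ - m₂ * y₃) / (x₂ * x₂ * m₃ * m₃) := by
      rw [div_mul_div_comm, div_mul_div_comm, div_eq_div_iff (by positivity) hp.ne']
      ring
    rw [heq] at habd
    have := mul_neg_of_neg_of_pos habd hp
    rwa [div_mul_cancel₀ _ hp.ne'] at this
  have h2 : 0 ≤ m₂ * y₃ * y₂ := by
    have hp : (0:ℝ) < x₂ * x₂ * m₃ := by positivity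
    have heq : m₂ / x₂ * (y₃ / m₃) * (y₂ / x₂)
        = m₂ * y₃ * y₂ / (x₂ * x₂ * m₃) := by
      rw [div_mul_div_comm, div_mul_div_comm, div_eq_div_iff (by positivity) hp.ne']
      ring
    rw [heq] at habc
    have := mul_nonneg habc hp.le
    rwa [div_mul_cancel₀ _ hp.ne'] at this
  have hne : m₂ * y₃ ≠ 0 := by
    rintro h; rw [h] at h1; simp at h1
  have hmain : m₃ * |y₂| < |m₂| * |y₃| := by
    rcases hne.lt_or_gt with hneg | hpos
    · have hy2 : y₂ ≤ 0 := by nlinarith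
      have hlt : m₂ * y₃ < m₃ * y₂ := by nlinarith
      have habs : |m₂| * |y₃| = -(m₂ * y₃) := by
        rw [← abs_mul, abs_of_neg hneg]
      rw [abs_of_nonpos hy2, habs]
      nlinarith
    · have hy2 : 0 ≤ y₂ := by nlinarith
      have hlt : m₃ * y₂ < m₂ * y₃ := by nlinarith
      have habs : |m₂| * |y₃| = m₂ * y₃ := by
        rw [← abs_mul, abs_of_pos hpos]
      rw [abs_of_nonneg hy2, habs]
      exact hlt
  refine ⟨hmain, ?_⟩
  rw [div_mul_div_comm, div_lt_div_iff₀ hy₄ (by positivity)]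
  nlinarith
end

section
/- Theorem 4, case â·b̂·ĉ ≥ 0 (total-effect test can erroneously reject competitive mediation under LSE-F): let r₀ > 0 and p₀ > 0 be real numbers. Then for every real r > r₀ there exist real numbers p and q such that p > p₀, 0 ≤ q < r·p − p₀·√(r² + 1), and q ≤ r₀·√(p² + 1). (That is, the region where the a-, b-, and d-tests all reject while the total-effect c-test fails to reject is nonempty.) -/
/-- Theorem 4, case `â·b̂·ĉ ≥ 0`: for thresholds `r₀, p₀ > 0` and every `r > r₀`, there exist
`p, q` with `p > p₀`, `0 ≤ q < r·p − p₀·√(r² + 1)`, and `q ≤ r₀·√(p² + 1)`: the region where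
the a-, b-, and d-tests all reject while the total-effect c-test fails to reject is nonempty. -/
theorem competitive_mediation_erroneous_rejection_nonneg_c
    (r₀ p₀ : ℝ) (hr₀ : 0 < r₀) (hp₀ : 0 < p₀) :
    ∀ r : ℝ, r₀ < r → ∃ p q : ℝ, p₀ < p ∧ 0 ≤ q ∧
      q < r * p - p₀ * Real.sqrt (r ^ 2 + 1) ∧
      q ≤ r₀ * Real.sqrt (p ^ 2 + 1) := by
  intro r hr
  have hrpos : 0 < r := hr₀.trans hr
  have hs : 0 ≤ Real.sqrt (r ^ 2 + 1) := Real.sqrt_nonneg _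
  refine ⟨p₀ + p₀ * Real.sqrt (r ^ 2 + 1) / r + 1, 0, ?_, le_refl 0, ?_, ?_⟩
  · nlinarith [mul_nonneg hp₀.le hs, div_nonneg (mul_nonneg hp₀.le hs) hrpos.le]
  · have : r * (p₀ * Real.sqrt (r ^ 2 + 1) / r) = p₀ * Real.sqrt (r ^ 2 + 1) := by
      field_simp
    nlinarith [mul_pos hrpos hp₀]
  · positivity
end

section
/- Theorem 4, case â·b̂·ĉ < 0 (total-effect test can erroneously reject competitive mediation under LSE-F): let r₀ > 0 and p₀ > 0 be real numbers. Then for every real r > r₀ there exist real numbers p and q such that p > p₀, q ≥ 0, q + r·p > p₀·√(r² + 1), and q ≤ r₀·√(p² + 1). (That is, the region where the a-, b-, and d-tests all reject while the total-effect c-test fails to reject is nonempty.) -/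
/-- Theorem 4, case `â·b̂·ĉ < 0`: for thresholds `r₀, p₀ > 0` and every `r > r₀`, there exist
`p, q` with `p > p₀`, `q ≥ 0`, `q + r·p > p₀·√(r² + 1)`, and `q ≤ r₀·√(p² + 1)`: the region
where the a-, b-, and d-tests all reject while the total-effect c-test fails to reject is
nonempty. -/
theorem competitive_mediation_erroneous_rejection_neg_c
    (r₀ p₀ : ℝ) (hr₀ : 0 < r₀) (hp₀ : 0 < p₀) :
    ∀ r : ℝ, r₀ < r → ∃ p q : ℝ, p₀ < p ∧ 0 ≤ q ∧
      p₀ * Real.sqrt (r ^ 2 + 1) < q + r * p ∧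
      q ≤ r₀ * Real.sqrt (p ^ 2 + 1) := by
  intro r hr
  have hrpos : 0 < r := hr₀.trans hr
  have hs : 0 ≤ Real.sqrt (r ^ 2 + 1) := Real.sqrt_nonneg _
  refine ⟨p₀ + p₀ * Real.sqrt (r ^ 2 + 1) / r + 1, 0, ?_, le_refl 0, ?_, ?_⟩
  · have : 0 ≤ p₀ * Real.sqrt (r ^ 2 + 1) / r :=
      div_nonneg (mul_nonneg hp₀.le hs) hrpos.le
    linarith
  · have h1 : r * (p₀ * Real.sqrt (r ^ 2 + 1) / r) = p₀ * Real.sqrt (r ^ 2 + 1) := by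
      field_simp
    have h2 : 0 < r * p₀ := mul_pos hrpos hp₀
    nlinarith [mul_pos hrpos hp₀]
  · positivity
end

section
/- Theorem 5 (total-effect test can erroneously reject competitive mediation under LSE-Sobel): let n ≥ 4 be a natural number and let z > 0, r₀ > 0, p₀ > 0 be real numbers. Then there exist real numbers r > 0, p > 0, and q ≥ 0 such that 1/((n−2)·r²) + 1/((n−3)·p²) < 1/z², 0 ≤ q < r·p − p₀·√(r² + 1), and q ≤ r₀·√(p² + 1). (That is, the region where the Sobel test for a×b rejects and the d-test rejects while the total-effect c-test fails to reject is nonempty.) -/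
/-- Theorem 5 (total-effect test can erroneously reject competitive mediation under
LSE-Sobel): for `n ≥ 4` and `z, r₀, p₀ > 0`, there exist `r > 0`, `p > 0`, `q ≥ 0` such that
the Sobel test for `a×b` rejects (`1/((n−2)r²) + 1/((n−3)p²) < 1/z²`), the d-test rejects
(`0 ≤ q < rp − p₀√(r²+1)`), and the total-effect c-test fails to reject
(`q ≤ r₀√(p²+1)`). -/
theorem competitive_mediation_erroneous_rejection_sobel
    (n : ℕ) (hn : 4 ≤ n) (z r₀ p₀ : ℝ) (hz : 0 < z) (hr₀ : 0 < r₀) (hp₀ : 0 < p₀) :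
    ∃ r p q : ℝ, 0 < r ∧ 0 < p ∧ 0 ≤ q ∧
      1 / (((n : ℝ) - 2) * r ^ 2) + 1 / (((n : ℝ) - 3) * p ^ 2) < 1 / z ^ 2 ∧
      q < r * p - p₀ * Real.sqrt (r ^ 2 + 1) ∧
      q ≤ r₀ * Real.sqrt (p ^ 2 + 1) := by
  set M : ℝ := 2 * z + p₀ + 1 with hM
  have hMpos : 0 < M := by positivity
  refine ⟨M, M, 0, hMpos, hMpos, le_refl 0, ?_, ?_, ?_⟩
  · have hn2 : (2 : ℝ) ≤ (n : ℝ) - 2 := by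
      have : (4 : ℝ) ≤ (n : ℝ) := by exact_mod_cast hn
      linarith
    have hn3 : (1 : ℝ) ≤ (n : ℝ) - 3 := by
      have : (4 : ℝ) ≤ (n : ℝ) := by exact_mod_cast hn
      linarith
    have hM2 : (0:ℝ) < M ^ 2 := by positivity
    have h1 : 1 / (((n : ℝ) - 2) * M ^ 2) ≤ 1 / (2 * M ^ 2) := by
      apply one_div_le_one_div_of_le (by positivity)
      nlinarith
    have h2 : 1 / (((n : ℝ) - 3) * M ^ 2) ≤ 1 / (1 * M ^ 2) := by
      apply one_div_le_one_div_of_le (by positivity)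
      nlinarith
    have h3 : 1 / (2 * M ^ 2) + 1 / (1 * M ^ 2) < 1 / z ^ 2 := by
      rw [div_add_div _ _ (by positivity) (by positivity), div_lt_div_iff₀ (by positivity) (by positivity)]
      have hz4 : 4 * z ^ 2 < M ^ 2 := by nlinarith
      nlinarith [mul_pos hM2 hM2]
    linarith
  · have hsq : Real.sqrt (M ^ 2 + 1) < M + 1 := by
      rw [show M ^ 2 + 1 = (M+1)^2 - 2*M by ring]
      calc Real.sqrt ((M+1)^2 - 2*M) < Real.sqrt ((M+1)^2) := by
            apply Real.sqrt_lt_sqrt (by nlinarith) (by nlinarith)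
        _ = M + 1 := by rw [Real.sqrt_sq (by positivity)]
    have hp₀M : p₀ * Real.sqrt (M ^ 2 + 1) < p₀ * (M + 1) := by
      exact mul_lt_mul_of_pos_left hsq hp₀
    nlinarith [sq_nonneg z, sq_nonneg p₀]
  · positivity
end

section
/- Key inequality in the proof of Theorem 3: let n ≥ 4 be a natural number and let z > 0, p₀ > 0 be real numbers such that √(n−3)·p₀ ≥ z/2 and 2z²/(n−2) < 1/9. Set r = z·√(2/(n−2)). Then z·√(2/(n−3)) < p₀·√(r² + 1)/r. (That is, the asymptotic Sobel threshold p₀(r) = z·√(2/(n−3)) at r² = 2z²/(n−2) lies strictly below p₀·√(r²+1)/r.) -/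
/-- Key inequality in the proof of Theorem 3: for `n ≥ 4`, `z > 0`, `p₀ > 0` with
`√(n−3)·p₀ ≥ z/2` and `2z²/(n−2) < 1/9`, setting `r = z·√(2/(n−2))` one has
`z·√(2/(n−3)) < p₀·√(r² + 1)/r`. -/
theorem sobel_threshold_key_inequality
    (n : ℕ) (hn : 4 ≤ n) (z p₀ : ℝ) (hz : 0 < z) (hp₀ : 0 < p₀)
    (h1 : z / 2 ≤ Real.sqrt ((n : ℝ) - 3) * p₀)
    (h2 : 2 * z ^ 2 / ((n : ℝ) - 2) < 1 / 9)
    (r : ℝ) (hr : r = z * Real.sqrt (2 / ((n : ℝ) - 2))) :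
    z * Real.sqrt (2 / ((n : ℝ) - 3)) < p₀ * Real.sqrt (r ^ 2 + 1) / r := by
  have hn4 : (4:ℝ) ≤ (n:ℝ) := by exact_mod_cast hn
  have hn3 : (1:ℝ) ≤ (n:ℝ) - 3 := by linarith
  have hn2 : (0:ℝ) < (n:ℝ) - 2 := by linarith
  have hs : 0 < Real.sqrt ((n:ℝ) - 3) := Real.sqrt_pos.2 (by linarith)
  have hsq : (Real.sqrt ((n:ℝ) - 3))^2 = (n:ℝ) - 3 := Real.sq_sqrt (by linarith)
  have hrpos : 0 < r := by
    rw [hr]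
    exact mul_pos hz (Real.sqrt_pos.2 (by positivity))
  have hr2 : r ^ 2 = 2 * z ^ 2 / ((n:ℝ) - 2) := by
    rw [hr, mul_pow, Real.sq_sqrt (by positivity)]
    ring
  have hrlt : r ^ 2 < 1 / 9 := by rw [hr2]; exact h2
  have hsqrt2 : (Real.sqrt 2)^2 = 2 := Real.sq_sqrt (by norm_num)
  have h2pos : (0:ℝ) < Real.sqrt 2 := Real.sqrt_pos.2 (by norm_num)
  have key : 2 * Real.sqrt 2 * r < Real.sqrt (r ^ 2 + 1) := by
    have := Real.lt_sqrt (x := 2 * Real.sqrt 2 * r) (y := r ^ 2 + 1)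
      (by positivity)
    rw [this]
    nlinarith [hrlt, hrpos]
  have hdiv : Real.sqrt (2 / ((n:ℝ) - 3)) = Real.sqrt 2 / Real.sqrt ((n:ℝ) - 3) := by
    rw [Real.sqrt_div (by norm_num : (0:ℝ) ≤ 2)]
  rw [hdiv, ← mul_div_assoc, div_lt_div_iff₀ hs hrpos]
  nlinarith [mul_lt_mul_of_pos_left key hp₀,
    mul_le_mul_of_nonneg_right h1 (le_of_lt (mul_pos (mul_pos (by norm_num : (0:ℝ)<2) h2pos) hrpos)),
    mul_pos hs hp₀, hrpos]
end

section
/- Theorem 3 (total-effect test can erroneously reject indirect-only mediation under LSE-Sobel), geometric form: let n ≥ 4 be a natural number and let z > 0, p₀ > 0, r₀ > 0 be real numbers such that √(n−3)·p₀ ≥ z/2 and 2z²/(n−2) < 1/9. Then there exist real numbers r > 0, p > 0, and q ≥ 0 such that 1/((n−2)·r²) + 1/((n−3)·p²) < 1/z², |q − r·p| ≤ p₀·√(r² + 1), and q ≤ r₀·√(p² + 1). (That is, the region where the Sobel test for a×b rejects while the d-test and the total-effect c-test both fail to reject is nonempty.) -/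
/-- Theorem 3 (total-effect test can erroneously reject indirect-only mediation under
LSE-Sobel), geometric form: for `n ≥ 4` and `z, p₀, r₀ > 0` with `√(n−3)·p₀ ≥ z/2` and
`2z²/(n−2) < 1/9`, there exist `r > 0`, `p > 0`, `q ≥ 0` such that the Sobel test for `a×b`
rejects (`1/((n−2)r²) + 1/((n−3)p²) < 1/z²`), the d-test fails to reject
(`|q − rp| ≤ p₀√(r²+1)`), and the total-effect c-test fails to reject (`q ≤ r₀√(p²+1)`). -/
theorem indirect_only_erroneous_rejection_sobel
    (n : ℕ) (hn : 4 ≤ n) (z p₀ r₀ : ℝ) (hz : 0 < z) (hp₀ : 0 < p₀) (hr₀ : 0 < r₀)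
    (h1 : z / 2 ≤ Real.sqrt ((n : ℝ) - 3) * p₀)
    (h2 : 2 * z ^ 2 / ((n : ℝ) - 2) < 1 / 9) :
    ∃ r p q : ℝ, 0 < r ∧ 0 < p ∧ 0 ≤ q ∧
      1 / (((n : ℝ) - 2) * r ^ 2) + 1 / (((n : ℝ) - 3) * p ^ 2) < 1 / z ^ 2 ∧
      |q - r * p| ≤ p₀ * Real.sqrt (r ^ 2 + 1) ∧
      q ≤ r₀ * Real.sqrt (p ^ 2 + 1) := by
  have h4 : (4 : ℝ) ≤ (n : ℝ) := by exact_mod_cast hn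
  have hn3 : (1 : ℝ) ≤ (n : ℝ) - 3 := by linarith
  have hn3' : (0 : ℝ) < (n : ℝ) - 3 := by linarith
  have hn2 : (0 : ℝ) < (n : ℝ) - 2 := by linarith
  set s : ℝ := Real.sqrt ((n : ℝ) - 3) with hs_def
  have hs : 0 < s := Real.sqrt_pos.mpr hn3'
  have hssq : s ^ 2 = (n : ℝ) - 3 := Real.sq_sqrt (le_of_lt hn3')
  have hsqrt2 : Real.sqrt 2 * Real.sqrt 2 = 2 := Real.mul_self_sqrt (by norm_num)
  have hsqrt2_pos : 0 < Real.sqrt 2 := Real.sqrt_pos.mpr (by norm_num)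
  have hz2 : 0 < z ^ 2 := pow_pos hz 2
  refine ⟨Real.sqrt 2 / 4, Real.sqrt 2 * z / s, 0, by positivity,
    div_pos (mul_pos hsqrt2_pos hz) hs, le_refl 0, ?_, ?_, by positivity⟩
  · -- Sobel rejection
    have hr2 : (Real.sqrt 2 / 4) ^ 2 = 1 / 8 := by
      rw [div_pow, sq, hsqrt2]; norm_num
    have hp2 : ((n : ℝ) - 3) * (Real.sqrt 2 * z / s) ^ 2 = 2 * z ^ 2 := by
      rw [div_pow, mul_pow, sq, hsqrt2, hssq]
      field_simp
    rw [hr2, hp2]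
    have h18 : 18 * z ^ 2 < (n : ℝ) - 2 := by
      have := (div_lt_div_iff₀ hn2 (by norm_num : (0:ℝ) < 9)).mp h2
      linarith
    have hA : 1 / (((n : ℝ) - 2) * (1 / 8)) < 4 / (9 * z ^ 2) := by
      rw [div_lt_div_iff₀ (by positivity) (by positivity)]
      nlinarith
    have hB : 4 / (9 * z ^ 2) + 1 / (2 * z ^ 2) = 17 / (18 * z ^ 2) := by
      field_simp; ring
    have hC : 17 / (18 * z ^ 2) < 1 / z ^ 2 := by
      rw [div_lt_div_iff₀ (by positivity) hz2]
      nlinarith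
    linarith
  · -- d-test fails to reject
    have hrp : (Real.sqrt 2 / 4) * (Real.sqrt 2 * z / s) = z / (2 * s) := by
      rw [div_mul_div_comm, ← mul_assoc, hsqrt2]
      ring
    rw [zero_sub, abs_neg, abs_of_nonneg (by positivity : (0:ℝ) ≤ (Real.sqrt 2 / 4) * (Real.sqrt 2 * z / s)), hrp]
    have h5 : z / (2 * s) ≤ p₀ := by
      rw [div_le_iff₀ (by positivity)]
      nlinarith
    have h6 : (1 : ℝ) ≤ Real.sqrt ((Real.sqrt 2 / 4) ^ 2 + 1) := by
      rw [show (1:ℝ) = Real.sqrt 1 from (Real.sqrt_one).symm]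
      exact Real.sqrt_le_sqrt (by nlinarith [sq_nonneg (Real.sqrt 2 / 4), Real.sqrt_one])
    calc z / (2 * s) ≤ p₀ := h5
      _ ≤ p₀ * Real.sqrt ((Real.sqrt 2 / 4) ^ 2 + 1) := le_mul_of_one_le_right (le_of_lt hp₀) h6
end
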